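/- arXiv:2202.01621 — 5 statements merged into one kernel-verified Lean document; each statement's English description precedes it below -/
import Mathlib

section
/- The function f(x) = (1/(2√π)) x^{-3/2} e^{-1/(4x)} on (0,∞) is a probability density: its integral over (0,∞) equals 1. -/
/-! The substitution `x = y⁻²` turns `x^(-3/2) e^(-c/x) dx` into `2 e^(-c y²) dy`, so the
integral is twice a half-line Gaussian integral, `√(π / c)`; for `c = 1/4` this is `2√π`. -/

open Real MeasureTheory Set

lemma rpow_neg_two_jacobian_mul_rpow_neg_three_halves_mul_exp {x : ℝ} (hx : 0 < x) (c : ℝ) :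
    (|(-2 : ℝ)| * x ^ ((-2 : ℝ) - 1)) •
        ((x ^ (-2 : ℝ)) ^ ((-3 : ℝ) / 2) * exp (-c / x ^ (-2 : ℝ)))
      = 2 * exp (-c * x ^ 2) := by
  have h_pow : (x ^ (-2 : ℝ)) ^ ((-3 : ℝ) / 2) = x ^ (3 : ℝ) := by
    rw [← rpow_mul hx.le]; norm_num
  have h_jac : x ^ ((-2 : ℝ) - 1) * x ^ (3 : ℝ) = 1 := by
    rw [← rpow_add hx]; norm_num
  have h_exp : -c / x ^ (-2 : ℝ) = -c * x ^ 2 := by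
    rw [rpow_neg hx.le, rpow_two, div_inv_eq_mul]
  rw [smul_eq_mul, h_pow, h_exp, abs_of_nonpos (by norm_num : (-2 : ℝ) ≤ 0)]
  linear_combination (2 * exp (-c * x ^ 2)) * h_jac

-- For `c ≤ 0` both sides are `0`: the integral diverges and `√` of a nonpositive number is `0`.
theorem integral_rpow_neg_three_halves_mul_exp_neg_div (c : ℝ) :
    ∫ x in Ioi (0 : ℝ), x ^ ((-3 : ℝ) / 2) * exp (-c / x) = √(π / c) := by
  rw [← integral_comp_rpow_Ioi (fun y : ℝ => y ^ ((-3 : ℝ) / 2) * exp (-c / y))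
      (by norm_num : (-2 : ℝ) ≠ 0),
    setIntegral_congr_fun measurableSet_Ioi
      fun x hx => rpow_neg_two_jacobian_mul_rpow_neg_three_halves_mul_exp hx c,
    integral_const_mul, integral_gaussian_Ioi]
  ring

theorem stable_half_density_integral :
    ∫ x in Ioi (0:ℝ), (1 / (2 * Real.sqrt π)) * x ^ ((-3:ℝ)/2) * Real.exp (-1 / (4 * x)) = 1 := by
  have h_integrand : ∀ x ∈ Ioi (0 : ℝ),
      (1 / (2 * √π)) * x ^ ((-3 : ℝ) / 2) * exp (-1 / (4 * x))
        = (1 / (2 * √π)) * (x ^ ((-3 : ℝ) / 2) * exp (-(1 / 4) / x)) := by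
    intro x _
    ring_nf
  have h_sqrt : √(π / (1 / 4)) = 2 * √π := by
    rw [show π / (1 / 4) = 2 ^ 2 * π by ring, sqrt_mul (by positivity), sqrt_sq zero_le_two]
  rw [setIntegral_congr_fun measurableSet_Ioi h_integrand, integral_const_mul,
    integral_rpow_neg_three_halves_mul_exp_neg_div, h_sqrt]
  have : √π ≠ 0 := (sqrt_pos.mpr pi_pos).ne'
  field_simp
end

section
/- The Laplace transform of f(x) = (1/(2√π)) x^{-3/2} e^{-1/(4x)} equals exp(-√s) for all s ≥ 0, i.e., ∫₀^∞ e^{-sx} (1/(2√π)) x^{-3/2} e^{-1/(4x)} dx = exp(-√s). -/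
open Real MeasureTheory Set

/-!
Substituting `x = 1 / (4 t²)` turns the transform into `(2 / √π) ∫₀^∞ exp (-(t² + b² / t²)) dt`
with `b = √s / 2`, and `t² + b² / t² = (t - b / t)² + 2 b`. Glasser's substitution `u = t - b / t`
maps `(0, ∞)` bijectively onto `ℝ` with `du = (1 + b / t²) dt`, and the reflection `t ↦ b / t`
exchanges the two parts of this weight; hence, `u ↦ exp (-u²)` being even,
`∫₀^∞ exp (-(t - b / t)²) dt = ½ ∫ exp (-u²) du = √π / 2`.
-/

section

variable {E : Type*} [NormedAddCommGroup E] [NormedSpace ℝ E] {b : ℝ}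

theorem hasDerivAt_sub_div (b : ℝ) {t : ℝ} (ht : t ≠ 0) :
    HasDerivAt (fun t => t - b / t) (1 + b / t ^ 2) t := by
  simpa only [div_eq_mul_inv, mul_neg, sub_neg_eq_add] using
    (hasDerivAt_id' t).fun_sub ((hasDerivAt_inv ht).const_mul b)

theorem strictMonoOn_sub_div (hb : 0 ≤ b) : StrictMonoOn (fun t => t - b / t) (Ioi 0) := by
  intro x hx y hy hxy
  have : b / y ≤ b / x := div_le_div_of_nonneg_left hb hx hxy.le
  dsimp only
  linarith

theorem image_sub_div_Ioi (hb : 0 < b) : (fun t => t - b / t) '' Ioi 0 = univ := by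
  refine eq_univ_of_forall fun u => ?_
  -- the positive root of `t ^ 2 - u * t - b = 0`
  set r := √(u ^ 2 + 4 * b)
  have hr : r ^ 2 = u ^ 2 + 4 * b := sq_sqrt (by positivity)
  have hur : |u| < r := by
    rw [← sqrt_sq_eq_abs]
    exact sqrt_lt_sqrt (sq_nonneg u) (by linarith)
  have hpos : 0 < (u + r) / 2 := by linarith [neg_abs_le u]
  refine ⟨(u + r) / 2, hpos, ?_⟩
  have : b / ((u + r) / 2) = (r - u) / 2 := by
    rw [div_eq_iff hpos.ne']
    nlinarith
  simp only [this]
  ring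

theorem integral_Ioi_comp_div (hb : 0 < b) (g : ℝ → E) :
    ∫ t in Ioi 0, (b / t ^ 2) • g (b / t) = ∫ t in Ioi 0, g t := by
  have himage : (fun t => b / t) '' Ioi 0 = Ioi 0 := by
    ext x
    refine ⟨?_, fun hx => ⟨b / x, div_pos hb hx, div_div_cancel₀ hb.ne'⟩⟩
    rintro ⟨t, ht, rfl⟩
    exact div_pos hb ht
  have hderiv : ∀ t ∈ Ioi (0 : ℝ), HasDerivWithinAt (fun t => b / t) (-(b / t ^ 2)) (Ioi 0) t :=
    fun t ht => by
      simpa only [div_eq_mul_inv, mul_neg] using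
        ((hasDerivAt_inv (ne_of_gt ht)).const_mul b).hasDerivWithinAt
  have hinj : InjOn (fun t => b / t) (Ioi 0) := fun x _ y _ h =>
    inv_injective <| mul_left_cancel₀ hb.ne' <| by simpa only [div_eq_mul_inv] using h
  have hcov := integral_image_eq_integral_abs_deriv_smul measurableSet_Ioi hderiv hinj g
  rw [himage] at hcov
  rw [hcov]
  refine setIntegral_congr_fun measurableSet_Ioi fun t _ => ?_
  rw [abs_neg, abs_of_nonneg (by positivity)]

theorem Integrable.of_one_add_smul {α : Type*} [MeasurableSpace α] {μ : Measure α}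
    {c : α → ℝ} {g : α → E} (hc : Measurable c) (hc₀ : ∀ x, 0 ≤ c x)
    (h : Integrable (fun x => (1 + c x) • g x) μ) :
    Integrable g μ ∧ Integrable (fun x => c x • g x) μ := by
  have hpos : ∀ x, 0 < 1 + c x := fun x => by linarith [hc₀ x]
  constructor
  · refine (h.bdd_smul 1 (φ := fun x => (1 + c x)⁻¹)
      (by fun_prop : Measurable _).aestronglyMeasurable (ae_of_all _ fun x => ?_)).congr
      (ae_of_all _ fun x => inv_smul_smul₀ (hpos x).ne' _)
    rw [norm_inv, Real.norm_of_nonneg (hpos x).le]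
    exact inv_le_one_of_one_le₀ (by linarith [hc₀ x])
  · refine (h.bdd_smul 1 (φ := fun x => c x / (1 + c x))
      (by fun_prop : Measurable _).aestronglyMeasurable (ae_of_all _ fun x => ?_)).congr
      (ae_of_all _ fun x => ?_)
    · rw [Real.norm_of_nonneg (div_nonneg (hc₀ x) (hpos x).le)]
      exact div_le_one_of_le₀ (by linarith) (hpos x).le
    · change (c x / (1 + c x)) • (1 + c x) • g x = c x • g x
      rw [smul_smul, div_mul_cancel₀ _ (hpos x).ne']

theorem integral_eq_integral_Ioi_smul_comp_sub_div (hb : 0 < b) (f : ℝ → E) :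
    ∫ u, f u = ∫ t in Ioi 0, (1 + b / t ^ 2) • f (t - b / t) := by
  rw [← setIntegral_univ, ← image_sub_div_Ioi hb, integral_image_eq_integral_abs_deriv_smul
    measurableSet_Ioi (fun t ht => (hasDerivAt_sub_div b (ne_of_gt ht)).hasDerivWithinAt)
    (strictMonoOn_sub_div hb.le).injOn]
  refine setIntegral_congr_fun measurableSet_Ioi fun t _ => ?_
  rw [abs_of_pos (by positivity)]

theorem integrableOn_Ioi_smul_comp_sub_div (hb : 0 < b) {f : ℝ → E} (hf : Integrable f) :
    IntegrableOn (fun t => (1 + b / t ^ 2) • f (t - b / t)) (Ioi 0) := by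
  have hf' : IntegrableOn f ((fun t => t - b / t) '' Ioi 0) := by
    rw [image_sub_div_Ioi hb]
    exact hf.integrableOn
  refine ((integrableOn_image_iff_integrableOn_abs_deriv_smul measurableSet_Ioi
    (fun t ht => (hasDerivAt_sub_div b (ne_of_gt ht)).hasDerivWithinAt)
    (strictMonoOn_sub_div hb.le).injOn f).mp hf').congr_fun (fun t _ => ?_)
    measurableSet_Ioi
  dsimp only
  rw [abs_of_pos (by positivity)]

theorem integral_Ioi_comp_sub_div_of_even {f : ℝ → E} (hf : Integrable f)
    (heven : ∀ u, f (-u) = f u) (hb : 0 < b) :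
    ∫ t in Ioi 0, f (t - b / t) = (2 : ℝ)⁻¹ • ∫ u, f u := by
  obtain ⟨hint₁, hint₂⟩ := Integrable.of_one_add_smul (by fun_prop) (fun t => by positivity)
    (integrableOn_Ioi_smul_comp_sub_div hb hf)
  have hreflect : ∫ t in Ioi 0, (b / t ^ 2) • f (t - b / t) = ∫ t in Ioi 0, f (t - b / t) := by
    rw [← integral_Ioi_comp_div hb (fun t => f (t - b / t))]
    refine setIntegral_congr_fun measurableSet_Ioi fun t _ => ?_
    rw [div_div_cancel₀ hb.ne', ← heven, neg_sub]
  simp only [integral_eq_integral_Ioi_smul_comp_sub_div hb f, add_smul, one_smul]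
  rw [integral_add hint₁ hint₂, hreflect, ← two_smul ℝ, smul_smul, inv_mul_cancel₀ two_ne_zero,
    one_smul]

theorem integral_Ioi_comp_one_div_four_mul_sq (g : ℝ → E) :
    ∫ t in Ioi 0, (1 / (2 * t ^ 3)) • g (1 / (4 * t ^ 2)) = ∫ x in Ioi 0, g x := by
  have himage : (fun t : ℝ => 1 / (4 * t ^ 2)) '' Ioi 0 = Ioi 0 := by
    ext x
    refine ⟨?_, fun hx => ?_⟩
    · rintro ⟨t, ht, rfl⟩
      have : (0 : ℝ) < t := ht
      exact mem_Ioi.mpr (by positivity)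
    have hsqrt : 0 < √x := sqrt_pos.mpr hx
    refine ⟨1 / (2 * √x), mem_Ioi.mpr (by positivity), ?_⟩
    have : √x ^ 2 = x := sq_sqrt (le_of_lt hx)
    field_simp
    linarith
  have hderiv : ∀ t ∈ Ioi (0 : ℝ),
      HasDerivWithinAt (fun t => 1 / (4 * t ^ 2)) (-(1 / (2 * t ^ 3))) (Ioi 0) t := fun t ht => by
    have ht : t ≠ 0 := ne_of_gt ht
    convert! (((hasDerivAt_pow 2 t).const_mul 4).inv (by positivity)).hasDerivWithinAt using 1
    · ext y
      simp [mul_comm]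
    · field_simp
      ring
  have hinj : InjOn (fun t : ℝ => 1 / (4 * t ^ 2)) (Ioi 0) := fun x hx y hy h => by
    have : x ^ 2 = y ^ 2 := by simpa using h
    exact (pow_left_inj₀ (le_of_lt hx) (le_of_lt hy) two_ne_zero).mp this
  have hcov := integral_image_eq_integral_abs_deriv_smul measurableSet_Ioi hderiv hinj g
  rw [himage] at hcov
  rw [hcov]
  refine setIntegral_congr_fun measurableSet_Ioi fun t ht => ?_
  rw [abs_neg, abs_of_pos (one_div_pos.mpr (by have := mem_Ioi.mp ht; positivity))]

end

theorem integral_Ioi_exp_neg_sq_sub_div {b : ℝ} (hb : 0 < b) :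
    ∫ t in Ioi 0, exp (-(t - b / t) ^ 2) = √π / 2 := by
  rw [integral_Ioi_comp_sub_div_of_even (f := fun u => exp (-u ^ 2))
    (by simpa using integrable_exp_neg_mul_sq one_pos) (fun u => by simp) hb]
  simpa [div_eq_inv_mul] using congrArg ((2 : ℝ)⁻¹ * ·) (integral_gaussian 1)

theorem integral_Ioi_exp_neg_sq_add_sq_div_sq {b : ℝ} (hb : 0 ≤ b) :
    ∫ t in Ioi 0, exp (-(t ^ 2 + b ^ 2 / t ^ 2)) = √π / 2 * exp (-(2 * b)) := by
  rcases hb.eq_or_lt with rfl | hb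
  · simpa using integral_gaussian_Ioi 1
  have hsq : EqOn (fun t => exp (-(t ^ 2 + b ^ 2 / t ^ 2)))
      (fun t => exp (-(2 * b)) * exp (-(t - b / t) ^ 2)) (Ioi 0) := fun t ht => by
    have ht : t ≠ 0 := ne_of_gt ht
    dsimp only
    rw [← exp_add]
    congr 1
    field_simp
    ring
  rw [setIntegral_congr_fun measurableSet_Ioi hsq, integral_const_mul,
    integral_Ioi_exp_neg_sq_sub_div hb, mul_comm]

theorem stable_half_laplace_transform (s : ℝ) (hs : 0 ≤ s) :
    ∫ x in Ioi (0:ℝ),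
      Real.exp (-s * x) * ((1 / (2 * Real.sqrt π)) * x ^ ((-3:ℝ)/2) * Real.exp (-1 / (4 * x)))
      = Real.exp (-Real.sqrt s) := by
  have hpoint : EqOn
      (fun t => (1 / (2 * t ^ 3)) • (exp (-s * (1 / (4 * t ^ 2))) * ((1 / (2 * √π)) *
        (1 / (4 * t ^ 2)) ^ ((-3:ℝ)/2) * exp (-1 / (4 * (1 / (4 * t ^ 2)))))))
      (fun t => 2 / √π * exp (-(t ^ 2 + (√s / 2) ^ 2 / t ^ 2))) (Ioi 0) := fun t ht => by
    have ht : (0 : ℝ) < t := ht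
    have hrpow : (1 / (4 * t ^ 2)) ^ ((-3:ℝ)/2) = 8 * t ^ 3 := by
      rw [show 1 / (4 * t ^ 2) = ((2 * t) ^ 2)⁻¹ by ring, inv_rpow (by positivity), ← rpow_neg
        (by positivity), ← rpow_natCast, ← rpow_mul (by positivity)]
      norm_num
      ring
    have hs' : (√s / 2) ^ 2 = s / 4 := by rw [div_pow, sq_sqrt hs]; norm_num
    simp only [smul_eq_mul, hrpow, hs', neg_add, exp_add]
    field_simp
    ring_nf
  rw [← integral_Ioi_comp_one_div_four_mul_sq, setIntegral_congr_fun measurableSet_Ioi hpoint,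
    integral_const_mul, integral_Ioi_exp_neg_sq_add_sq_div_sq (by positivity)]
  field_simp
end

section
/- More generally, for μ > 0, the Laplace transform of f(x|μ) = (μ/(2√π)) x^{-3/2} e^{-μ²/(4x)} equals exp(-μ√s) for all s ≥ 0. -/
open Real MeasureTheory Set

/-!
Substituting `x = μ² / (4 t²)` turns the Laplace integral into
`(2 / √π) ∫₀^∞ exp (-t² - c² / t²) dt` with `c = μ √s / 2`. This integral equals
`(√π / 2) e^{-2c}`: the Cauchy–Schlömilch substitution `u = t - c / t` maps `(0, ∞)` bijectively
onto `ℝ` with `du = (1 + c / t²) dt` and `u² = t² + c² / t² - 2c`, so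
`∫₀^∞ (1 + c / t²) exp (-t² - c² / t²) dt = √π e^{-2c}`; the involution `t ↦ c / t` shows that the
two summands of `1 + c / t²` contribute equally.
-/

section ChangeOfVariables

variable {E : Type*} [NormedAddCommGroup E] [NormedSpace ℝ E] {c : ℝ}

lemma image_const_div_Ioi_zero (hc : 0 < c) : (c / ·) '' Ioi (0 : ℝ) = Ioi 0 := by
  refine Subset.antisymm (image_subset_iff.2 fun t (ht : 0 < t) => div_pos hc ht) ?_
  exact fun y (hy : 0 < y) => ⟨c / y, div_pos hc hy, div_div_cancel₀ hc.ne'⟩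

lemma hasDerivAt_const_div {t : ℝ} (ht : t ≠ 0) : HasDerivAt (c / ·) (-(c / t ^ 2)) t := by
  simpa [div_eq_mul_inv, mul_neg] using (hasDerivAt_inv ht).const_mul c

lemma injOn_const_div_Ioi_zero (hc : 0 < c) : InjOn (c / ·) (Ioi (0 : ℝ)) :=
  fun t _ u _ h => by simpa [div_eq_mul_inv, hc.ne'] using h

lemma integrableOn_Ioi_comp_const_div_iff (hc : 0 < c) {g : ℝ → E} :
    IntegrableOn (fun t => (c / t ^ 2) • g (c / t)) (Ioi 0) ↔ IntegrableOn g (Ioi 0) := by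
  have h := integrableOn_image_iff_integrableOn_abs_deriv_smul measurableSet_Ioi
    (fun t ht => (hasDerivAt_const_div (mem_Ioi.1 ht).ne').hasDerivWithinAt)
    (injOn_const_div_Ioi_zero hc) g
  rw [image_const_div_Ioi_zero hc] at h
  refine (integrableOn_congr_fun (fun t (ht : 0 < t) => ?_) measurableSet_Ioi).trans h.symm
  rw [abs_neg, abs_of_pos (by positivity)]

lemma integral_Ioi_comp_const_div (hc : 0 < c) (g : ℝ → E) :
    ∫ t in Ioi 0, (c / t ^ 2) • g (c / t) = ∫ t in Ioi 0, g t := by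
  have h := integral_image_eq_integral_abs_deriv_smul measurableSet_Ioi
    (fun t ht => (hasDerivAt_const_div (mem_Ioi.1 ht).ne').hasDerivWithinAt)
    (injOn_const_div_Ioi_zero hc) g
  rw [image_const_div_Ioi_zero hc] at h
  refine h ▸ setIntegral_congr_fun measurableSet_Ioi fun t (ht : 0 < t) => ?_
  rw [abs_neg, abs_of_pos (by positivity)]

lemma integral_Ioi_comp_const_div_sq (hc : 0 < c) (g : ℝ → E) :
    ∫ t in Ioi 0, (2 * c / t ^ 3) • g (c / t ^ 2) = ∫ x in Ioi 0, g x := by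
  rw [← integral_Ioi_comp_const_div hc g,
    ← integral_comp_rpow_Ioi_of_pos (g := fun u => (c / u ^ 2) • g (c / u)) two_pos]
  refine setIntegral_congr_fun measurableSet_Ioi fun t (ht : 0 < t) => ?_
  rw [smul_smul, rpow_two, show (2 : ℝ) - 1 = 1 by norm_num, rpow_one]
  congr 1
  field_simp

lemma image_sub_const_div_Ioi_zero (hc : 0 < c) : (fun t => t - c / t) '' Ioi (0 : ℝ) = univ := by
  refine eq_univ_of_forall fun y => ?_
  have hr : √(y ^ 2 + 4 * c) ^ 2 = y ^ 2 + 4 * c := sq_sqrt (by positivity)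
  have hy : |y| < √(y ^ 2 + 4 * c) := by
    rw [← sqrt_sq_eq_abs]; exact sqrt_lt_sqrt (sq_nonneg y) (by linarith)
  refine ⟨(y + √(y ^ 2 + 4 * c)) / 2, by simp only [mem_Ioi]; linarith [neg_abs_le y], ?_⟩
  have : y + √(y ^ 2 + 4 * c) ≠ 0 := by linarith [neg_abs_le y]
  field_simp
  linear_combination hr

lemma hasDerivAt_sub_const_div {t : ℝ} (ht : t ≠ 0) :
    HasDerivAt (fun t => t - c / t) (1 + c / t ^ 2) t :=
  ((hasDerivAt_id' t).sub (hasDerivAt_const_div ht)).congr_deriv (sub_neg_eq_add _ _)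

lemma injOn_sub_const_div_Ioi_zero (hc : 0 < c) : InjOn (fun t => t - c / t) (Ioi (0 : ℝ)) := by
  have hderiv t (ht : t ∈ Ioi (0 : ℝ)) := hasDerivAt_sub_const_div (c := c) (mem_Ioi.1 ht).ne'
  refine (strictMonoOn_of_hasDerivWithinAt_pos (f' := fun t => 1 + c / t ^ 2) (convex_Ioi 0)
    (fun t ht => (hderiv t ht).continuousAt.continuousWithinAt)
    (fun t ht => ?_) (fun t ht => ?_)).injOn
  · rw [interior_Ioi] at ht ⊢; exact (hderiv t ht).hasDerivWithinAt
  · rw [interior_Ioi] at ht; positivity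

lemma integral_Ioi_comp_sub_const_div (hc : 0 < c) (g : ℝ → E) :
    ∫ t in Ioi 0, (1 + c / t ^ 2) • g (t - c / t) = ∫ x, g x := by
  have h := integral_image_eq_integral_abs_deriv_smul measurableSet_Ioi
    (fun t ht => (hasDerivAt_sub_const_div (c := c) (mem_Ioi.1 ht).ne').hasDerivWithinAt)
    (injOn_sub_const_div_Ioi_zero hc) g
  rw [image_sub_const_div_Ioi_zero hc, setIntegral_univ] at h
  refine h ▸ setIntegral_congr_fun measurableSet_Ioi fun t (ht : 0 < t) => ?_
  rw [abs_of_pos (by positivity)]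

end ChangeOfVariables

lemma integral_Ioi_exp_neg_sq_sub_sq_div_sq {c : ℝ} (hc : 0 ≤ c) :
    ∫ t in Ioi 0, exp (-t ^ 2 - c ^ 2 / t ^ 2) = √π / 2 * exp (-(2 * c)) := by
  rcases hc.eq_or_lt with rfl | hc
  · simpa using integral_gaussian_Ioi 1
  set F : ℝ → ℝ := fun t => exp (-t ^ 2 - c ^ 2 / t ^ 2)
  have hF_symm : ∀ t ∈ Ioi (0 : ℝ), F (c / t) = F t := fun t (ht : 0 < t) => by
    simp only [F]; congr 1; field_simp; ring
  have hF : IntegrableOn F (Ioi 0) := by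
    refine (integrable_exp_neg_mul_sq one_pos).integrableOn.mono'
      (by fun_prop : Measurable F).aestronglyMeasurable (ae_of_all _ fun t => ?_)
    rw [norm_of_nonneg (exp_pos _).le, exp_le_exp]
    nlinarith [div_nonneg (sq_nonneg c) (sq_nonneg t)]
  have hF_div : IntegrableOn (fun t => c / t ^ 2 * F t) (Ioi 0) :=
    ((integrableOn_Ioi_comp_const_div_iff hc).2 hF).congr_fun
      (fun t ht => by simp only [smul_eq_mul, hF_symm t ht]) measurableSet_Ioi
  have h_full : ∫ t in Ioi 0, (1 + c / t ^ 2) * F t = √π * exp (-(2 * c)) := by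
    have h := integral_Ioi_comp_sub_const_div hc fun x => exp (-x ^ 2)
    rw [show ∫ x, exp (-x ^ 2) = √π by simpa using integral_gaussian 1] at h
    rw [← h, ← integral_mul_const]
    refine setIntegral_congr_fun measurableSet_Ioi fun t (ht : 0 < t) => ?_
    rw [smul_eq_mul, mul_assoc, ← exp_add]
    simp only [F]
    congr 2
    field_simp
    ring
  have h_half : ∫ t in Ioi 0, (1 + c / t ^ 2) * F t = 2 * ∫ t in Ioi 0, F t := by
    simp_rw [add_mul, one_mul]
    rw [integral_add hF hF_div, ← integral_Ioi_comp_const_div hc F, two_mul]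
    congr 1
    exact setIntegral_congr_fun measurableSet_Ioi fun t ht => by
      simp only [smul_eq_mul, hF_symm t ht]
  linarith

lemma stable_half_laplace_integrand_comp_div_sq {μ s t : ℝ} (hμ : 0 < μ) (hs : 0 ≤ s)
    (ht : 0 < t) :
    (2 * (μ ^ 2 / 4) / t ^ 3) * (exp (-s * (μ ^ 2 / 4 / t ^ 2)) *
      (μ / (2 * √(π * (μ ^ 2 / 4 / t ^ 2) ^ (3 : ℕ))) *
        exp (-μ ^ 2 / (4 * (μ ^ 2 / 4 / t ^ 2)))))
      = 2 / √π * exp (-t ^ 2 - (μ * √s / 2) ^ 2 / t ^ 2) := by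
  have h_sqrt : √(π * (μ ^ 2 / 4 / t ^ 2) ^ 3) = √π * (μ ^ 3 / (8 * t ^ 3)) := by
    rw [sqrt_mul pi_pos.le, show (μ ^ 2 / 4 / t ^ 2) ^ 3 = (μ ^ 3 / (8 * t ^ 3)) ^ 2 by ring,
      sqrt_sq (by positivity)]
  have h_exp : exp (-s * (μ ^ 2 / 4 / t ^ 2)) * exp (-μ ^ 2 / (4 * (μ ^ 2 / 4 / t ^ 2)))
      = exp (-t ^ 2 - (μ * √s / 2) ^ 2 / t ^ 2) := by
    rw [← exp_add, div_pow, mul_pow, sq_sqrt hs]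
    congr 1
    field_simp
    ring
  have hπ : 0 < √π := sqrt_pos.2 pi_pos
  rw [h_sqrt, ← h_exp]
  field_simp
  ring

theorem stable_half_laplace_transform_scaled (μ : ℝ) (hμ : 0 < μ) (s : ℝ) (hs : 0 ≤ s) :
    ∫ x in Ioi (0:ℝ),
      Real.exp (-s * x) * ((μ / (2 * Real.sqrt (π * x ^ (3:ℕ)))) * Real.exp (-μ^2 / (4 * x)))
      = Real.exp (-μ * Real.sqrt s) := by
  rw [← integral_Ioi_comp_const_div_sq (by positivity : 0 < μ ^ 2 / 4)]
  calc _ = ∫ t in Ioi 0, 2 / √π * exp (-t ^ 2 - (μ * √s / 2) ^ 2 / t ^ 2) :=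
        setIntegral_congr_fun measurableSet_Ioi fun t ht =>
          stable_half_laplace_integrand_comp_div_sq hμ hs ht
    _ = exp (-μ * √s) := by
      rw [integral_const_mul, integral_Ioi_exp_neg_sq_sub_sq_div_sq (by positivity)]
      field_simp
end

section
/- The convolution of the gamma densities g_{1/2,0}(x) = x^{−1/2}/Γ(1/2) and g_{1/2,1}(x) = x^{−1/2}e^{−x}/Γ(1/2) equals e^{−x/2} I₀(x/2) for all x > 0. -/
/-!
Substituting `y = x (1 - cos θ) / 2` turns `(x - y)^(-1/2) y^(-1/2) dy` into `dθ` on `(0, π)`,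
and `Γ(1/2)² = π`, so the convolution is `π⁻¹ e^(-x/2) ∫₀^π e^((x/2) cos θ) dθ`. Expanding the
exponential, the odd moments of `cos` on `(0, π)` vanish and the even ones are
`∫₀^π cos^(2k) = π (2k)! / (4^k (k!)²)`, which leaves exactly `π` times the series of `I₀(x/2)`.
-/

open Real MeasureTheory Set

noncomputable def besselI0 (x : ℝ) : ℝ :=
  ∑' k : ℕ, (x / 2) ^ (2 * k) / ((Nat.factorial k : ℝ)) ^ 2

open scoped Nat

theorem integral_zero_pi_cos_pow_add_two (n : ℕ) :
    ∫ θ in (0:ℝ)..π, cos θ ^ (n + 2) = (n + 1) / (n + 2) * ∫ θ in (0:ℝ)..π, cos θ ^ n := by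
  simp [integral_cos_pow]

theorem integral_cos_pow_odd (k : ℕ) : ∫ θ in (0:ℝ)..π, cos θ ^ (2 * k + 1) = 0 := by
  induction k with
  | zero => simp
  | succ k ih =>
    rw [show 2 * (k + 1) + 1 = 2 * k + 1 + 2 by ring, integral_zero_pi_cos_pow_add_two, ih,
      mul_zero]

theorem integral_cos_pow_even (k : ℕ) :
    ∫ θ in (0:ℝ)..π, cos θ ^ (2 * k) = π * (2 * k)! / (4 ^ k * (k ! : ℝ) ^ 2) := by
  induction k with
  | zero => simp
  | succ k ih =>
    rw [show 2 * (k + 1) = 2 * k + 2 by ring, integral_zero_pi_cos_pow_add_two, ih,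
      Nat.factorial_succ, Nat.factorial_succ, Nat.factorial_succ]
    push_cast
    field_simp
    ring

theorem hasSum_integral_exp_mul_cos (c : ℝ) :
    HasSum (fun n : ℕ ↦ c ^ n / n ! * ∫ θ in (0:ℝ)..π, cos θ ^ n)
      (∫ θ in (0:ℝ)..π, exp (c * cos θ)) := by
  simp_rw [← intervalIntegral.integral_const_mul]
  refine intervalIntegral.hasSum_integral_of_dominated_convergence (fun n _ ↦ |c| ^ n / n !)
    (fun n ↦ by fun_prop) (fun n ↦ .of_forall fun θ _ ↦ ?_)
    (.of_forall fun _ _ ↦ summable_pow_div_factorial |c|) intervalIntegrable_const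
    (.of_forall fun θ _ ↦ ?_)
  · rw [norm_mul, norm_div, norm_pow, norm_pow, Real.norm_natCast, Real.norm_eq_abs,
      Real.norm_eq_abs]
    exact mul_le_of_le_one_right (by positivity) (pow_le_one₀ (abs_nonneg _) (abs_cos_le_one θ))
  · simpa [mul_pow, mul_div_right_comm, Real.exp_eq_exp_ℝ] using
      NormedSpace.expSeries_div_hasSum_exp (c * cos θ)

theorem integral_exp_mul_cos (c : ℝ) :
    ∫ θ in (0:ℝ)..π, exp (c * cos θ) = π * besselI0 c := by
  have hodd : ∀ n ∉ range (2 * · : ℕ → ℕ), c ^ n / n ! * ∫ θ in (0:ℝ)..π, cos θ ^ n = 0 := by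
    rintro n hn
    obtain ⟨k, rfl | rfl⟩ := Nat.even_or_odd' n
    · exact absurd ⟨k, rfl⟩ hn
    rw [integral_cos_pow_odd, mul_zero]
  have heven := ((mul_right_injective₀ two_ne_zero).hasSum_iff hodd).mpr
    (hasSum_integral_exp_mul_cos c)
  rw [← heven.tsum_eq, besselI0, ← tsum_mul_left]
  congr 1 with k
  rw [Function.comp_apply, integral_cos_pow_even]
  simp only [div_pow, pow_mul]
  field_simp
  norm_num

theorem abs_mul_rpow_neg_half_mul_rpow_neg_half {x θ : ℝ} (hx : 0 < x) (hθ : θ ∈ Ioo 0 π) :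
    |x * sin θ / 2| * ((x - x * (1 - cos θ) / 2) ^ (-1 / 2 : ℝ) *
      (x * (1 - cos θ) / 2) ^ (-1 / 2 : ℝ)) = 1 := by
  have hs : 0 < x * sin θ / 2 := by have := sin_pos_of_pos_of_lt_pi hθ.1 hθ.2; positivity
  have hprod : (x - x * (1 - cos θ) / 2) * (x * (1 - cos θ) / 2) = (x * sin θ / 2) ^ 2 := by
    rw [div_pow, mul_pow, sin_sq]; ring
  rw [← mul_rpow (by nlinarith [cos_le_one θ]) (by nlinarith [neg_one_le_cos θ]), hprod,
    ← rpow_natCast, ← rpow_mul hs.le, abs_of_pos hs]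
  norm_num
  rw [rpow_neg_one, mul_inv_cancel₀ hs.ne']

theorem image_Ioo_mul_one_sub_cos_div_two {x : ℝ} (hx : 0 < x) :
    (fun θ ↦ x * (1 - cos θ) / 2) '' Ioo 0 π = Ioo 0 x := by
  ext y
  constructor
  · rintro ⟨θ, ⟨hθ₀, hθπ⟩, rfl⟩
    have h₁ : cos θ < 1 := by simpa using cos_lt_cos_of_nonneg_of_le_pi le_rfl hθπ.le hθ₀
    have h₂ : -1 < cos θ := by simpa using cos_lt_cos_of_nonneg_of_le_pi hθ₀.le le_rfl hθπ
    constructor <;> nlinarith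
  · rintro ⟨hy₀, hyx⟩
    have ht : 1 - 2 * y / x < 1 := by have := div_pos (by linarith : 0 < 2 * y) hx; linarith
    have ht' : -1 < 1 - 2 * y / x := by
      have := (div_lt_iff₀ hx).2 (by linarith : 2 * y < 2 * x)
      linarith
    refine ⟨arccos (1 - 2 * y / x), ⟨arccos_pos.2 ht, arccos_lt_pi.2 ht'⟩, ?_⟩
    dsimp only
    rw [cos_arccos ht'.le ht.le]
    field_simp
    ring

theorem integral_arcsine_substitution {E : Type*} [NormedAddCommGroup E] [NormedSpace ℝ E]
    {x : ℝ} (hx : 0 < x) (h : ℝ → E) :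
    ∫ y in (0:ℝ)..x, ((x - y) ^ (-1 / 2 : ℝ) * y ^ (-1 / 2 : ℝ)) • h y =
      ∫ θ in (0:ℝ)..π, h (x * (1 - cos θ) / 2) := by
  have hderiv : ∀ θ, HasDerivAt (fun θ ↦ x * (1 - cos θ) / 2) (x * sin θ / 2) θ := fun θ ↦ by
    simpa using (((hasDerivAt_cos θ).const_sub 1).const_mul x).div_const 2
  have hinj : InjOn (fun θ ↦ x * (1 - cos θ) / 2) (Ioo 0 π) := fun a ha b hb hab ↦
    injOn_cos (Ioo_subset_Icc_self ha) (Ioo_subset_Icc_self hb) (by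
      have := mul_left_cancel₀ hx.ne' (by linarith : x * (1 - cos a) = x * (1 - cos b))
      linarith)
  rw [intervalIntegral.integral_of_le hx.le, intervalIntegral.integral_of_le pi_pos.le,
    integral_Ioc_eq_integral_Ioo, integral_Ioc_eq_integral_Ioo,
    ← image_Ioo_mul_one_sub_cos_div_two hx,
    integral_image_eq_integral_abs_deriv_smul measurableSet_Ioo
      (fun θ _ ↦ (hderiv θ).hasDerivWithinAt) hinj]
  refine setIntegral_congr_fun measurableSet_Ioo fun θ hθ ↦ ?_
  rw [smul_smul, abs_mul_rpow_neg_half_mul_rpow_neg_half hx hθ, one_smul]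

theorem gamma_half_convolution_bessel (x : ℝ) (hx : 0 < x) :
    ∫ y in (0:ℝ)..x,
        ((x - y) ^ ((-1:ℝ)/2) / Real.Gamma (1/2)) *
        (y ^ ((-1:ℝ)/2) * Real.exp (-y) / Real.Gamma (1/2))
      = Real.exp (-x / 2) * besselI0 (x / 2) := by
  have hΓ : Gamma (1 / 2) * Gamma (1 / 2) = π := by
    rw [Gamma_one_half_eq, mul_self_sqrt pi_pos.le]
  calc _ = π⁻¹ * ∫ y in (0:ℝ)..x, ((x - y) ^ (-1 / 2 : ℝ) * y ^ (-1 / 2 : ℝ)) • exp (-y) := by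
        rw [← intervalIntegral.integral_const_mul, ← hΓ]
        congr 1 with y
        rw [smul_eq_mul]
        ring
    _ = π⁻¹ * ∫ θ in (0:ℝ)..π, exp (-x / 2) * exp (x / 2 * cos θ) := by
        rw [integral_arcsine_substitution hx]
        simp_rw [← exp_add]
        ring_nf
    _ = exp (-x / 2) * besselI0 (x / 2) := by
        rw [intervalIntegral.integral_const_mul, integral_exp_mul_cos]
        field_simp
end

section
/- Mittag-Leffler series representation of the fractional gamma density: for 0 < α < 1 and λ > 0, the function m(x) = −Σ_{k=1}^∞ (−λ)^k x^{αk−1}/Γ(αk) on (0,∞) has Laplace transform ∫₀^∞ e^{−sx} m(x) dx = λ/(λ + s^α) for all s with s^α > λ. -/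
/-!
The `k`-th term of the series, `c ^ (k + 1) x ^ (α (k + 1) - 1) / Γ(α (k + 1))` with `c = -λ`, is a
multiple of a Gamma density, whose Laplace transform is `s ^ (-α (k + 1))`; so it transforms to
`(c / s ^ α) ^ (k + 1)`. The same computation with `|c|` in place of `c` shows that the integrals of
the absolute values form a convergent geometric series when `|c| < s ^ α`, which justifies
integrating term by term, and summing the geometric series gives `c / (s ^ α - c)`.
-/

open Real MeasureTheory Set

section GammaDensity

variable {t s : ℝ}

theorem integrableOn_exp_neg_mul_mul_rpow_div_Gamma (c : ℝ) (ht : 0 < t) (hs : 0 < s) :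
    IntegrableOn (fun x : ℝ => exp (-s * x) * (c * x ^ (t - 1) / Gamma t)) (Ioi 0) := by
  have h := (integrableOn_rpow_mul_exp_neg_mul_rpow (p := 1) (s := t - 1) (b := s)
    (by linarith) one_pos hs).const_mul (c / Gamma t)
  refine IntegrableOn.congr_fun h (fun x _ => ?_) measurableSet_Ioi
  simp only [rpow_one]
  ring

theorem integral_exp_neg_mul_mul_rpow_div_Gamma (c : ℝ) (ht : 0 < t) (hs : 0 < s) :
    ∫ x in Ioi (0 : ℝ), exp (-s * x) * (c * x ^ (t - 1) / Gamma t) = c / s ^ t := by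
  have hΓ : Gamma t ≠ 0 := (Gamma_pos_of_pos ht).ne'
  calc ∫ x in Ioi (0 : ℝ), exp (-s * x) * (c * x ^ (t - 1) / Gamma t)
      = c / Gamma t * ∫ x in Ioi (0 : ℝ), x ^ (t - 1) * exp (-(s * x)) := by
        rw [← integral_const_mul]
        refine setIntegral_congr_fun measurableSet_Ioi (fun x _ => ?_)
        simp only [neg_mul]
        ring
    _ = c / s ^ t := by
        rw [integral_rpow_mul_exp_neg_mul_Ioi ht hs, one_div, inv_rpow hs.le]
        field_simp

theorem norm_exp_neg_mul_mul_rpow_div_Gamma (c : ℝ) (ht : 0 < t) {x : ℝ} (hx : 0 < x) :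
    ‖exp (-s * x) * (c * x ^ (t - 1) / Gamma t)‖ = exp (-s * x) * (|c| * x ^ (t - 1) / Gamma t) := by
  rw [norm_eq_abs, abs_mul, abs_div, abs_mul, abs_of_pos (exp_pos _),
    abs_of_pos (rpow_pos_of_pos hx _), abs_of_pos (Gamma_pos_of_pos ht)]

theorem integral_norm_exp_neg_mul_mul_rpow_div_Gamma (c : ℝ) (ht : 0 < t) (hs : 0 < s) :
    ∫ x in Ioi (0 : ℝ), ‖exp (-s * x) * (c * x ^ (t - 1) / Gamma t)‖ = |c| / s ^ t := by
  rw [← integral_exp_neg_mul_mul_rpow_div_Gamma |c| ht hs]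
  exact setIntegral_congr_fun measurableSet_Ioi
    (fun x hx => norm_exp_neg_mul_mul_rpow_div_Gamma c ht hx)

end GammaDensity

theorem tsum_pow_succ_of_abs_lt_one {q : ℝ} (hq : |q| < 1) :
    ∑' k : ℕ, q ^ (k + 1) = q / (1 - q) := by
  simp_rw [pow_succ', tsum_mul_left, tsum_geometric_of_abs_lt_one hq, div_eq_mul_inv]

theorem integral_exp_neg_mul_tsum_pow_mul_rpow_div_Gamma {α c s : ℝ} (hα : 0 < α) (hs : 0 < s)
    (hc : |c| < s ^ α) :
    ∫ x in Ioi (0 : ℝ), exp (-s * x) *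
        ∑' k : ℕ, c ^ (k + 1) * x ^ (α * (k + 1) - 1) / Gamma (α * (k + 1)) =
      c / (s ^ α - c) := by
  have hsα : 0 < s ^ α := rpow_pos_of_pos hs α
  have ht (k : ℕ) : 0 < α * (k + 1) := by positivity
  have hpow (k : ℕ) (a : ℝ) : a ^ (k + 1) / s ^ (α * (k + 1)) = (a / s ^ α) ^ (k + 1) := by
    rw [div_pow, ← rpow_mul_natCast hs.le]
    push_cast
    rfl
  have hq : |c / s ^ α| < 1 := by rwa [abs_div, abs_of_pos hsα, div_lt_one hsα]
  have hsummable : Summable fun k : ℕ => ∫ x in Ioi (0 : ℝ),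
      ‖exp (-s * x) * (c ^ (k + 1) * x ^ (α * (k + 1) - 1) / Gamma (α * (k + 1)))‖ := by
    simp_rw [integral_norm_exp_neg_mul_mul_rpow_div_Gamma _ (ht _) hs, abs_pow, hpow, pow_succ]
    refine (summable_geometric_of_abs_lt_one ?_).mul_right _
    rwa [abs_div, abs_abs, abs_of_pos hsα, div_lt_one hsα]
  simp_rw [← tsum_mul_left]
  rw [← integral_tsum_of_summable_integral_norm
    (fun k => integrableOn_exp_neg_mul_mul_rpow_div_Gamma _ (ht k) hs) hsummable]
  simp_rw [integral_exp_neg_mul_mul_rpow_div_Gamma _ (ht _) hs, hpow]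
  rw [tsum_pow_succ_of_abs_lt_one hq]
  field_simp

theorem mittag_leffler_fractional_gamma_laplace_general (α lam : ℝ)
    (hα : 0 < α) (hlam : 0 < lam)
    (m : ℝ → ℝ)
    (hm : ∀ x : ℝ, m x = -∑' k : ℕ, (-lam) ^ (k + 1) * x ^ (α * (k + 1) - 1) / Real.Gamma (α * (k + 1)))
    (s : ℝ) (hs : 0 < s) (hsα : lam < s ^ α) :
    ∫ x in Ioi (0:ℝ), Real.exp (-s * x) * m x = lam / (lam + s ^ α) := by
  have hc : |-lam| < s ^ α := by rwa [abs_neg, abs_of_pos hlam]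
  simp_rw [hm, mul_neg, integral_neg, integral_exp_neg_mul_tsum_pow_mul_rpow_div_Gamma hα hs hc,
    sub_neg_eq_add, neg_div, neg_neg, add_comm]

theorem mittag_leffler_fractional_gamma_laplace (α lam : ℝ)
    (hα : 0 < α) (hα1 : α < 1) (hlam : 0 < lam)
    (m : ℝ → ℝ)
    (hm : ∀ x : ℝ, m x = -∑' k : ℕ, (-lam) ^ (k + 1) * x ^ (α * (k + 1) - 1) / Real.Gamma (α * (k + 1)))
    (s : ℝ) (hs : 0 < s) (hsα : lam < s ^ α) :
    ∫ x in Ioi (0:ℝ), Real.exp (-s * x) * m x = lam / (lam + s ^ α) :=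
  mittag_leffler_fractional_gamma_laplace_general α lam hα hlam m hm s hs hsα
end
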